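/- Involution dilogarithm identity: for any d ≥ 1, coefficients z = (z_0,…,z_d) with z_0 = z_d = 1, z_s ≥ 0, and any y > 0: L̃_z(y) + L̃_{z*}(1/y) = L̃_{z*}(∞), where z* is the reverse of z, L̃_z(x) = (1/2)∫₀ˣ (log P_z(t)/t - log(t)·P_z'(t)/P_z(t)) dt, and L̃_{z*}(∞) = lim_{x→∞} L̃_{z*}(x). -/

import Mathlib

/-!
Put `G(x) = L̃_z(x) + L̃_{z*}(1/x)` for `x > 0`. Since `P_{z*}(1/x) = x⁻ᵈ P_z(x)`, taking logarithms
and differentiating expresses `log P_{z*}` and `P_{z*}'/P_{z*}` at `1/x` through the same quantities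
for `P_z` at `x`; this makes the integrand of `L̃_{z*}` at `1/x` equal to `x²` times that of `L̃_z`
at `x`, so `G' = 0` and `G` is a constant `l`. Then `L̃_{z*}(x) = l - L̃_z(1/x) → l - L̃_z(0) = l`
as `x → ∞`, because `L̃_z` is continuous at `0`: near `0` the integrand is `log P_z(t)/t`, which
is bounded as `log ∘ P_z` is Lipschitz and vanishes at `0`, plus `log t` times a continuous function.
-/

open MeasureTheory Real Polynomial Filter

/-- The Rogers dilogarithm of higher degree associated with a polynomial `P`:
`L̃(x) = (1/2)∫₀ˣ (log P(t)/t - log(t)·P'(t)/P(t)) dt`. -/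
noncomputable def Ltil (P : Polynomial ℝ) (x : ℝ) : ℝ :=
  (1/2) * ∫ t in (0:ℝ)..x,
    (Real.log (P.eval t) / t - Real.log t * P.derivative.eval t / P.eval t)

open scoped Topology

section Coefficients

variable {d : ℕ} {w : ℕ → ℝ}

lemma eval_zero_sum_C_mul_X_pow :
    (∑ s ∈ Finset.range (d + 1), C (w s) * X ^ s).eval 0 = w 0 := by
  simp [eval_finsetSum, Finset.sum_range_succ']

lemma one_le_eval_sum_C_mul_X_pow (h0 : w 0 = 1) (hw : ∀ s, s ≤ d → 0 ≤ w s) {t : ℝ}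
    (ht : 0 ≤ t) : 1 ≤ (∑ s ∈ Finset.range (d + 1), C (w s) * X ^ s).eval t := by
  simp only [eval_finsetSum, eval_mul, eval_C, eval_pow, eval_X]
  rw [Finset.sum_range_succ', pow_zero, mul_one, h0]
  exact le_add_of_nonneg_left <| Finset.sum_nonneg fun s hs =>
    mul_nonneg (hw _ (Finset.mem_range.1 hs)) (pow_nonneg ht _)

lemma eval_inv_mul_pow_sum_reverse {y : ℝ} (hy : y ≠ 0) :
    (∑ s ∈ Finset.range (d + 1), C (w (d - s)) * X ^ s).eval y⁻¹ * y ^ d =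
      (∑ s ∈ Finset.range (d + 1), C (w s) * X ^ s).eval y := by
  simp only [eval_finsetSum, eval_mul, eval_C, eval_pow, eval_X, Finset.sum_mul]
  rw [← Finset.sum_range_reflect]
  refine Finset.sum_congr rfl fun s hs => ?_
  have hsd : s ≤ d := Nat.lt_succ_iff.1 (Finset.mem_range.1 hs)
  rw [add_tsub_cancel_right, Nat.sub_sub_self hsd, mul_assoc, inv_pow, ← div_eq_inv_mul]
  congr 1
  rw [div_eq_iff (pow_ne_zero _ hy), ← pow_add, Nat.add_sub_cancel' hsd]

end Coefficients

section Reflection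

variable {P Q : ℝ[X]} {d : ℕ}

lemma log_eval_inv (hP : ∀ t, 0 < t → 0 < P.eval t)
    (hPQ : ∀ y, 0 < y → Q.eval y⁻¹ * y ^ d = P.eval y) {y : ℝ} (hy : 0 < y) :
    log (Q.eval y⁻¹) = log (P.eval y) - d * log y := by
  rw [← hPQ y hy, log_mul (left_ne_zero_of_mul (hPQ y hy ▸ (hP y hy).ne'))
    (pow_ne_zero d hy.ne'), log_pow]
  ring

lemma derivative_eval_inv_div_eval_inv (hP : ∀ t, 0 < t → 0 < P.eval t)
    (hPQ : ∀ y, 0 < y → Q.eval y⁻¹ * y ^ d = P.eval y) {y : ℝ} (hy : 0 < y) :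
    Q.derivative.eval y⁻¹ / Q.eval y⁻¹ = d * y - y ^ 2 * (P.derivative.eval y / P.eval y) := by
  have hQ : Q.eval y⁻¹ ≠ 0 := left_ne_zero_of_mul (hPQ y hy ▸ (hP y hy).ne')
  have hlhs : HasDerivAt (fun x => log (Q.eval x⁻¹))
      (Q.derivative.eval y⁻¹ / Q.eval y⁻¹ * -(y ^ 2)⁻¹) y :=
    ((Q.hasDerivAt y⁻¹).log hQ).comp y (hasDerivAt_inv hy.ne')
  have hrhs : HasDerivAt (fun x => log (P.eval x) - d * log x)
      (P.derivative.eval y / P.eval y - d * y⁻¹) y :=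
    ((P.hasDerivAt y).log (hP y hy).ne').sub ((hasDerivAt_log hy.ne').const_mul _)
  have hderiv := hlhs.unique <| hrhs.congr_of_eventuallyEq <|
    Filter.mem_of_superset (Ioi_mem_nhds hy) fun x hx => log_eval_inv hP hPQ hx
  field_simp at hderiv
  rw [one_div] at hderiv
  linear_combination -hderiv

end Reflection

lemma intervalIntegrable_log_eval_div {P : ℝ[X]} {b : ℝ} (hb : 0 ≤ b) (h0 : P.eval 0 = 1)
    (hpos : ∀ t, 0 ≤ t → 0 < P.eval t) :
    IntervalIntegrable (fun t => log (P.eval t) / t) volume 0 b := by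
  obtain ⟨K, hK⟩ : ∃ K, LipschitzOnWith K (fun t => log (P.eval t)) (Set.Icc 0 b) :=
    ((P.contDiff_aeval 1).contDiffOn.log fun t ht => (hpos t ht.1).ne').exists_lipschitzOnWith
      one_ne_zero (convex_Icc 0 b) isCompact_Icc
  rw [intervalIntegrable_iff_integrableOn_Ioc_of_le hb]
  refine Measure.integrableOn_of_bounded (M := K) measure_Ioc_lt_top.ne
    (P.continuous.measurable.log.div measurable_id).aestronglyMeasurable ?_
  rw [ae_restrict_iff' measurableSet_Ioc]
  filter_upwards with t ⟨ht0, htb⟩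
  have hlog := hK.dist_le_mul t ⟨ht0.le, htb⟩ 0 ⟨le_rfl, hb⟩
  rw [h0, Real.dist_eq, Real.dist_eq, log_one, sub_zero, sub_zero, abs_of_pos ht0] at hlog
  rwa [norm_div, Real.norm_eq_abs, Real.norm_eq_abs, abs_of_pos ht0, div_le_iff₀ ht0]

namespace Ltil

noncomputable def integrand (P : ℝ[X]) (t : ℝ) : ℝ :=
  log (P.eval t) / t - log t * P.derivative.eval t / P.eval t

variable {P Q : ℝ[X]}

lemma continuousOn_integrand (hpos : ∀ t, 0 < t → 0 < P.eval t) :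
    ContinuousOn (integrand P) (Set.Ioi 0) := by
  intro t ht
  have hPt := (hpos t ht).ne'
  have ht0 : t ≠ 0 := ne_of_gt ht
  unfold integrand
  fun_prop (disch := assumption)

lemma intervalIntegrable_integrand {b : ℝ} (hb : 0 ≤ b) (h0 : P.eval 0 = 1)
    (hpos : ∀ t, 0 ≤ t → 0 < P.eval t) :
    IntervalIntegrable (integrand P) volume 0 b := by
  have hlogDeriv : ContinuousOn (fun t => P.derivative.eval t / P.eval t) (Set.uIcc 0 b) :=
    P.derivative.continuous.continuousOn.div P.continuous.continuousOn fun t ht =>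
      (hpos t (Set.uIcc_of_le hb ▸ ht).1).ne'
  refine (intervalIntegrable_log_eval_div hb h0 hpos).sub
    ((intervalIntegral.intervalIntegrable_log'.mul_continuousOn hlogDeriv).congr fun t _ => ?_)
  exact (mul_div_assoc _ _ _).symm

lemma integrand_inv {d : ℕ} (hP : ∀ t, 0 < t → 0 < P.eval t)
    (hPQ : ∀ y, 0 < y → Q.eval y⁻¹ * y ^ d = P.eval y) {y : ℝ} (hy : 0 < y) :
    integrand Q y⁻¹ = y ^ 2 * integrand P y := by
  simp only [integrand, mul_div_assoc, derivative_eval_inv_div_eval_inv hP hPQ hy,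
    log_eval_inv hP hPQ hy, log_inv]
  field_simp
  ring

lemma hasDerivAt (h0 : P.eval 0 = 1) (hpos : ∀ t, 0 ≤ t → 0 < P.eval t) {y : ℝ} (hy : 0 < y) :
    HasDerivAt (Ltil P) (integrand P y / 2) y := by
  have hcont := continuousOn_integrand fun t ht => hpos t ht.le
  have hprim := intervalIntegral.integral_hasDerivAt_right
    (intervalIntegrable_integrand hy.le h0 hpos)
    (hcont.stronglyMeasurableAtFilter isOpen_Ioi y hy) (hcont.continuousAt (Ioi_mem_nhds hy))
  exact (hprim.const_mul (1 / 2)).congr_deriv (one_div_mul_eq_div _ _)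

lemma tendsto_nhdsGT_zero (h0 : P.eval 0 = 1) (hpos : ∀ t, 0 ≤ t → 0 < P.eval t) :
    Tendsto (Ltil P) (𝓝[>] 0) (𝓝 0) := by
  have hcont : ContinuousOn (Ltil P) (Set.uIcc 0 1) :=
    (intervalIntegral.continuousOn_primitive_interval'
      (intervalIntegrable_integrand zero_le_one h0 hpos) Set.left_mem_uIcc).const_smul (1 / 2 : ℝ)
  have hcont0 := (hcont 0 Set.left_mem_uIcc).mono_of_mem_nhdsWithin (s := Set.Ioi 0) <| by
    rw [Set.uIcc_of_le zero_le_one]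
    exact Icc_mem_nhdsGT_of_mem ⟨le_rfl, zero_lt_one⟩
  simpa [Ltil] using hcont0.tendsto

theorem exists_tendsto_atTop_and_add_inv_eq {d : ℕ} (hP0 : P.eval 0 = 1) (hQ0 : Q.eval 0 = 1)
    (hP : ∀ t, 0 ≤ t → 0 < P.eval t) (hQ : ∀ t, 0 ≤ t → 0 < Q.eval t)
    (hPQ : ∀ y, 0 < y → Q.eval y⁻¹ * y ^ d = P.eval y) :
    ∃ l, Tendsto (Ltil Q) atTop (𝓝 l) ∧ ∀ y, 0 < y → Ltil P y + Ltil Q y⁻¹ = l := by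
  have hderiv (y : ℝ) (hy : 0 < y) : HasDerivAt (fun x => Ltil P x + Ltil Q x⁻¹) 0 y := by
    refine ((hasDerivAt hP0 hP hy).add
      ((hasDerivAt hQ0 hQ (inv_pos.2 hy)).comp y (hasDerivAt_inv hy.ne'))).congr_deriv ?_
    rw [integrand_inv (fun t ht => hP t ht.le) hPQ hy]
    field_simp
    ring
  obtain ⟨l, hl⟩ := isOpen_Ioi.exists_is_const_of_deriv_eq_zero isPreconnected_Ioi
    (fun y hy => (hderiv y hy).differentiableAt.differentiableWithinAt)
    (fun y hy => (hderiv y hy).deriv)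
  refine ⟨l, ?_, hl⟩
  have hQ_eq : (fun x => l - Ltil P x⁻¹) =ᶠ[atTop] Ltil Q := by
    filter_upwards [eventually_gt_atTop 0] with x hx
    rw [← hl x⁻¹ (inv_pos.2 hx), inv_inv, add_sub_cancel_left]
  simpa using (tendsto_const_nhds.sub
    ((tendsto_nhdsGT_zero hP0 hP).comp tendsto_inv_atTop_nhdsGT_zero)).congr' hQ_eq

end Ltil

theorem involution_dilogarithm_identity_general
    (d : ℕ) (z : ℕ → ℝ)
    (hz0 : z 0 = 1) (hzd : z d = 1) (hznn : ∀ s, s ≤ d → 0 ≤ z s)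
    (P Pstar : Polynomial ℝ)
    (hP : P = ∑ s ∈ Finset.range (d + 1), Polynomial.C (z s) * Polynomial.X ^ s)
    (hPstar : Pstar = ∑ s ∈ Finset.range (d + 1), Polynomial.C (z (d - s)) * Polynomial.X ^ s) :
    ∃ l : ℝ, Tendsto (Ltil Pstar) atTop (nhds l) ∧
      ∀ y : ℝ, 0 < y → Ltil P y + Ltil Pstar (1 / y) = l := by
  have hzd' : z (d - 0) = 1 := hzd
  have hP0 : P.eval 0 = 1 := by rw [hP, eval_zero_sum_C_mul_X_pow, hz0]
  have hPstar0 : Pstar.eval 0 = 1 := by rw [hPstar, eval_zero_sum_C_mul_X_pow, hzd']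
  have hPpos (t : ℝ) (ht : 0 ≤ t) : 0 < P.eval t :=
    hP ▸ one_pos.trans_le (one_le_eval_sum_C_mul_X_pow hz0 hznn ht)
  have hPstarpos (t : ℝ) (ht : 0 ≤ t) : 0 < Pstar.eval t :=
    hPstar ▸ one_pos.trans_le (one_le_eval_sum_C_mul_X_pow (w := fun s => z (d - s)) hzd'
      (fun s _ => hznn _ (Nat.sub_le d s)) ht)
  have hreflect (y : ℝ) (hy : 0 < y) : Pstar.eval y⁻¹ * y ^ d = P.eval y :=
    hP ▸ hPstar ▸ eval_inv_mul_pow_sum_reverse hy.ne'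
  simpa only [one_div] using
    Ltil.exists_tendsto_atTop_and_add_inv_eq hP0 hPstar0 hPpos hPstarpos hreflect

theorem involution_dilogarithm_identity
    (d : ℕ) (hd : 1 ≤ d) (z : ℕ → ℝ)
    (hz0 : z 0 = 1) (hzd : z d = 1) (hznn : ∀ s, s ≤ d → 0 ≤ z s)
    (P Pstar : Polynomial ℝ)
    (hP : P = ∑ s ∈ Finset.range (d + 1), Polynomial.C (z s) * Polynomial.X ^ s)
    (hPstar : Pstar = ∑ s ∈ Finset.range (d + 1), Polynomial.C (z (d - s)) * Polynomial.X ^ s) :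
    ∃ l : ℝ, Tendsto (Ltil Pstar) atTop (nhds l) ∧
      ∀ y : ℝ, 0 < y → Ltil P y + Ltil Pstar (1 / y) = l :=
  involution_dilogarithm_identity_general d z hz0 hzd hznn P Pstar hP hPstar
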